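/- The set H̄ of 4×4 complex block matrices of the form [[z^{1/2} (S̄ᴴ)⁻¹, 0],[0, z^{−1/2} S̄]] · [[1, −i r̄],[0, 1]] with z > 0 real, S̄ ∈ SL(2,ℂ), and r̄ a 2×2 Hermitian matrix, is a subgroup of SU(2,2) = {M ∈ GL₄(ℂ) : Mᴴ Σ̄ M = Σ̄, det M = 1}, where Σ̄ is the 4×4 block matrix [[0,1],[1,0]]. -/

import Mathlib

open Matrix

/-- The group metric `Σ̄ = [[0,I₂],[I₂,0]]`. -/
noncomputable def SigBar : Matrix (Fin 2 ⊕ Fin 2) (Fin 2 ⊕ Fin 2) ℂ :=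
  fromBlocks 0 1 1 0

/-- The set `H̄` of matrices `[[z^{1/2}(S̄ᴴ)⁻¹,0],[0,z^{-1/2}S̄]]·[[1,-i r̄],[0,1]]`. -/
noncomputable def HbarSet : Set (Matrix (Fin 2 ⊕ Fin 2) (Fin 2 ⊕ Fin 2) ℂ) :=
  {M | ∃ (z : ℝ) (S r : Matrix (Fin 2) (Fin 2) ℂ), 0 < z ∧ S.det = 1 ∧ r.IsHermitian ∧
    M = fromBlocks ((Real.sqrt z : ℂ) • (Sᴴ)⁻¹) 0 0 (((Real.sqrt z : ℂ)⁻¹) • S) *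
        fromBlocks 1 (-(Complex.I • r)) 0 1}

/-!
Every element of `H̄` factors as `D(s, S) N(r)` with a block-diagonal dilation
`D(s, S) = diag(s (Sᴴ)⁻¹, s⁻¹ S)` and a translation `N(r) = [[1, -i r], [0, 1]]`.
Both factors preserve `Σ̄` (for `D` because `(s (Sᴴ)⁻¹)ᴴ (s⁻¹ S) = 1`, for `N` because `r` is
Hermitian) and have determinant one. Closure under products and inverses comes from
`D D' = D''`, `N(r) N(t) = N(r + t)` and the commutation rule
`N(r) D(s, T) = D(s, T) N(s⁻² Tᴴ r T)`, which keeps the translation part Hermitian.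
-/

namespace Hbar

variable {n : Type*} [DecidableEq n]

def translation (r : Matrix n n ℂ) : Matrix (n ⊕ n) (n ⊕ n) ℂ :=
  fromBlocks 1 (-(Complex.I • r)) 0 1

@[simp]
lemma translation_zero : translation (0 : Matrix n n ℂ) = 1 := by
  simp [translation, fromBlocks_one]

variable [Fintype n]

noncomputable def dilation (s : ℝ) (S : Matrix n n ℂ) : Matrix (n ⊕ n) (n ⊕ n) ℂ :=
  fromBlocks ((s : ℂ) • (Sᴴ)⁻¹) 0 0 ((s : ℂ)⁻¹ • S)

@[simp]
lemma dilation_one : dilation 1 (1 : Matrix n n ℂ) = 1 := by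
  simp [dilation, fromBlocks_one]

lemma dilation_mul_dilation (s t : ℝ) (S T : Matrix n n ℂ) :
    dilation s S * dilation t T = dilation (s * t) (S * T) := by
  simp only [dilation, fromBlocks_multiply, conjTranspose_mul, Matrix.mul_inv_rev,
    smul_mul_smul_comm, Complex.ofReal_mul, mul_inv, Matrix.mul_zero, Matrix.zero_mul, add_zero,
    zero_add]

lemma translation_mul_translation (r t : Matrix n n ℂ) :
    translation r * translation t = translation (r + t) := by
  simp only [translation, fromBlocks_multiply, Matrix.mul_one, Matrix.one_mul, Matrix.mul_zero,
    Matrix.zero_mul, add_zero, zero_add, smul_add, neg_add]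
  rw [add_comm]

lemma translation_mul_dilation (s : ℝ) {T : Matrix n n ℂ} (hT : IsUnit T.det)
    (r : Matrix n n ℂ) :
    translation r * dilation s T = dilation s T * translation ((s ^ 2)⁻¹ • (Tᴴ * r * T)) := by
  have hTH : (Tᴴ)⁻¹ * Tᴴ = 1 := nonsing_inv_mul _ (by simpa [det_conjTranspose] using hT.star)
  have hcomm : (s : ℂ) • (Tᴴ)⁻¹ * ((s ^ 2)⁻¹ • (Tᴴ * r * T)) = r * ((s : ℂ)⁻¹ • T) := by
    rw [← Complex.coe_smul, smul_mul_smul_comm, ← Matrix.mul_assoc, ← Matrix.mul_assoc, hTH,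
      Matrix.one_mul, mul_smul_comm]
    congr 1
    push_cast
    field_simp
  have hB : -(Complex.I • r) * ((s : ℂ)⁻¹ • T)
      = (s : ℂ) • (Tᴴ)⁻¹ * -(Complex.I • ((s ^ 2)⁻¹ • (Tᴴ * r * T))) := by
    rw [Matrix.mul_neg, mul_smul_comm Complex.I ((s : ℂ) • (Tᴴ)⁻¹), hcomm, Matrix.neg_mul,
      smul_mul_assoc]
  simp only [translation, dilation, fromBlocks_multiply, Matrix.mul_one, Matrix.one_mul,
    Matrix.mul_zero, Matrix.zero_mul, add_zero, zero_add, hB]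

lemma dilation_conjTranspose_mul_mul {s : ℝ} (hs : s ≠ 0) {S : Matrix n n ℂ} (hS : IsUnit S.det) :
    (dilation s S)ᴴ * fromBlocks 0 1 1 0 * dilation s S = fromBlocks 0 1 1 0 := by
  have hSH : IsUnit Sᴴ.det := by simpa [det_conjTranspose] using hS.star
  have h₁ : ((s : ℂ) • (Sᴴ)⁻¹)ᴴ * ((s : ℂ)⁻¹ • S) = 1 := by
    rw [conjTranspose_smul, conjTranspose_nonsing_inv, conjTranspose_conjTranspose,
      Complex.star_def, Complex.conj_ofReal, smul_mul_smul_comm,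
      mul_inv_cancel₀ (by exact_mod_cast hs), one_smul, nonsing_inv_mul _ hS]
  have h₂ : ((s : ℂ)⁻¹ • S)ᴴ * ((s : ℂ) • (Sᴴ)⁻¹) = 1 := by
    rw [← conjTranspose_conjTranspose (_ * _), conjTranspose_mul, conjTranspose_conjTranspose, h₁,
      conjTranspose_one]
  rw [dilation, fromBlocks_conjTranspose, fromBlocks_multiply, fromBlocks_multiply]
  simp only [conjTranspose_zero, Matrix.mul_zero, Matrix.zero_mul, Matrix.mul_one,
    add_zero, zero_add, h₁, h₂]

lemma translation_conjTranspose_mul_mul {r : Matrix n n ℂ} (hr : r.IsHermitian) :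
    (translation r)ᴴ * fromBlocks 0 1 1 0 * translation r = fromBlocks 0 1 1 0 := by
  simp [translation, fromBlocks_conjTranspose, fromBlocks_multiply, hr.eq]

lemma det_dilation {s : ℝ} (hs : s ≠ 0) {S : Matrix n n ℂ} (hS : S.det = 1) :
    (dilation s S).det = 1 := by
  rw [dilation, det_fromBlocks_zero₂₁, det_smul, det_smul, det_nonsing_inv, det_conjTranspose, hS]
  simp only [star_one, Ring.inverse_one, mul_one, inv_pow]
  exact mul_inv_cancel₀ (by exact_mod_cast pow_ne_zero _ hs)

lemma det_translation (r : Matrix n n ℂ) : (translation r).det = 1 := by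
  simp [translation]

end Hbar

open Hbar in
/-- `HbarSet` for blocks of any size, parametrized by `s = z^{1/2}`. -/
def Hbar (n : Type*) [Fintype n] [DecidableEq n] : Set (Matrix (n ⊕ n) (n ⊕ n) ℂ) :=
  {M | ∃ s : ℝ, 0 < s ∧ ∃ S r : Matrix n n ℂ, S.det = 1 ∧ r.IsHermitian ∧
    M = dilation s S * translation r}

namespace Hbar

variable {n : Type*} [Fintype n] [DecidableEq n] {M N : Matrix (n ⊕ n) (n ⊕ n) ℂ}

lemma one_mem : (1 : Matrix (n ⊕ n) (n ⊕ n) ℂ) ∈ Hbar n :=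
  ⟨1, one_pos, 1, 0, det_one, isHermitian_zero, by simp⟩

lemma mul_mem (hM : M ∈ Hbar n) (hN : N ∈ Hbar n) : M * N ∈ Hbar n := by
  obtain ⟨s, hs, S, r, hS, hr, rfl⟩ := hM
  obtain ⟨t, ht, T, u, hT, hu, rfl⟩ := hN
  refine ⟨s * t, mul_pos hs ht, S * T, (t ^ 2)⁻¹ • (Tᴴ * r * T) + u,
    by rw [det_mul, hS, hT, one_mul],
    ((isHermitian_conjTranspose_mul_mul T hr).smul (IsSelfAdjoint.all _)).add hu, ?_⟩
  calc dilation s S * translation r * (dilation t T * translation u)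
      = dilation s S * (translation r * dilation t T) * translation u := by
        simp only [Matrix.mul_assoc]
    _ = dilation s S * dilation t T *
          (translation ((t ^ 2)⁻¹ • (Tᴴ * r * T)) * translation u) := by
        rw [translation_mul_dilation t (hT ▸ isUnit_one)]
        simp only [Matrix.mul_assoc]
    _ = _ := by rw [dilation_mul_dilation, translation_mul_translation]

lemma inv_mem (hM : M ∈ Hbar n) : M⁻¹ ∈ Hbar n := by
  obtain ⟨s, hs, S, r, hS, hr, rfl⟩ := hM
  have hSu : IsUnit S.det := hS ▸ isUnit_one
  have hS' : S⁻¹.det = 1 := by rw [det_nonsing_inv, hS, Ring.inverse_one]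
  have hinv : dilation s S * translation r * (translation (-r) * dilation s⁻¹ S⁻¹) = 1 := by
    calc dilation s S * translation r * (translation (-r) * dilation s⁻¹ S⁻¹)
        = dilation s S * (translation r * translation (-r)) * dilation s⁻¹ S⁻¹ := by
          simp only [Matrix.mul_assoc]
      _ = 1 := by
          rw [translation_mul_translation, add_neg_cancel, translation_zero, Matrix.mul_one,
            dilation_mul_dilation, mul_inv_cancel₀ hs.ne', mul_nonsing_inv _ hSu, dilation_one]
  rw [inv_eq_right_inv hinv, translation_mul_dilation _ (hS' ▸ isUnit_one)]
  exact ⟨s⁻¹, inv_pos.2 hs, S⁻¹, _, hS',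
    (isHermitian_conjTranspose_mul_mul _ hr.neg).smul (IsSelfAdjoint.all _), rfl⟩

lemma conjTranspose_mul_fromBlocks_mul (hM : M ∈ Hbar n) :
    Mᴴ * fromBlocks 0 1 1 0 * M = fromBlocks 0 1 1 0 := by
  obtain ⟨s, hs, S, r, hS, hr, rfl⟩ := hM
  calc (dilation s S * translation r)ᴴ * fromBlocks 0 1 1 0 * (dilation s S * translation r)
      = (translation r)ᴴ * ((dilation s S)ᴴ * fromBlocks 0 1 1 0 * dilation s S) *
          translation r := by
        simp only [conjTranspose_mul, Matrix.mul_assoc]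
    _ = fromBlocks 0 1 1 0 := by
        rw [dilation_conjTranspose_mul_mul hs.ne' (hS ▸ isUnit_one),
          translation_conjTranspose_mul_mul hr]

lemma det_eq_one (hM : M ∈ Hbar n) : M.det = 1 := by
  obtain ⟨s, hs, S, r, hS, -, rfl⟩ := hM
  rw [det_mul, det_dilation hs.ne' hS, det_translation, one_mul]

end Hbar

lemma HbarSet_eq_Hbar : HbarSet = Hbar (Fin 2) := by
  ext M
  constructor
  · rintro ⟨z, S, r, hz, hS, hr, rfl⟩
    exact ⟨√z, Real.sqrt_pos.2 hz, S, r, hS, hr, rfl⟩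
  · rintro ⟨s, hs, S, r, hS, hr, rfl⟩
    refine ⟨s ^ 2, S, r, by positivity, hS, hr, ?_⟩
    rw [Real.sqrt_sq hs.le]
    rfl

theorem HbarSet_subgroup_of_SU22 :
    (∀ M ∈ HbarSet, Mᴴ * SigBar * M = SigBar ∧ M.det = 1) ∧
    (1 : Matrix (Fin 2 ⊕ Fin 2) (Fin 2 ⊕ Fin 2) ℂ) ∈ HbarSet ∧
    (∀ M ∈ HbarSet, ∀ N ∈ HbarSet, M * N ∈ HbarSet) ∧
    (∀ M ∈ HbarSet, M⁻¹ ∈ HbarSet) := by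
  rw [HbarSet_eq_Hbar]
  exact ⟨fun M hM => ⟨Hbar.conjTranspose_mul_fromBlocks_mul hM, Hbar.det_eq_one hM⟩,
    Hbar.one_mem, fun M hM N hN => Hbar.mul_mem hM hN, fun M hM => Hbar.inv_mem hM⟩
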